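/- Let k ≥ n ≥ 1, let ψ_1,…,ψ_k be vectors in ℂ^n, and let p_1,…,p_k be strictly positive reals. Let ρ = ∑_i p_i ψ_i ψ_i^† be the n×n density matrix, with real eigenvalues x_1,…,x_n, and let A be the k×k matrix with entries a_{ij} = ⟨ψ_i, ψ_j⟩. Then for every i with 1 ≤ i ≤ n, the i-th elementary symmetric polynomial of the eigenvalues satisfies e_i(x_1,…,x_n) = ∑_{u_1<…<u_i} p_{u_1}⋯p_{u_i} · det A_{u_1,…,u_i}, where A_{u_1,…,u_i} is the i×i principal submatrix of A obtained by keeping only the rows and columns with labels in {u_1,…,u_i}. -/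

import Mathlib

/-- The `i`-th elementary symmetric polynomial of `x : Fin n → ℝ`. -/
noncomputable def esymm (n i : ℕ) (x : Fin n → ℝ) : ℝ :=
  ∑ s ∈ Finset.powersetCard i (Finset.univ : Finset (Fin n)), ∏ u ∈ s, x u

/-!
Write `ρ = (Ψ D) Ψᴴ`, where `Ψ` has the `ψ_u` as columns and `D = diag p`, so that
`Ψᴴ (Ψ D) = A D`. The characteristic polynomials of `(Ψ D) Ψᴴ` and `Ψᴴ (Ψ D)` differ only by the
factor `X ^ (k - n)`. Comparing coefficients, Vieta's formula on the left and the expansion of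
charpoly coefficients into principal minors on the right give the claim, since the principal
minor of `A D` on `s` is `∏_{u ∈ s} p_u` times that of `A`.
-/

open Polynomial Matrix Finset

theorem Finset.prod_X_sub_C_coeff_card_sub {R σ : Type*} [CommRing R] (s : Finset σ) (r : σ → R)
    {k : ℕ} (hk : k ≤ #s) :
    (∏ i ∈ s, (X - C (r i))).coeff (#s - k) =
      (-1) ^ k * ∑ t ∈ s.powersetCard k, ∏ i ∈ t, r i := by
  have hcard : Multiset.card (s.val.map r) = #s := Multiset.card_map r s.val
  have hsub : #s - (#s - k) = k := Nat.sub_sub_self hk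
  rw [Finset.prod_eq_multiset_prod, ← Function.comp_def (fun t => X - C t) r,
    ← Multiset.map_map, Multiset.prod_X_sub_C_coeff _ (by omega), hcard, hsub,
    Finset.esymm_map_val]

theorem Matrix.det_submatrix_mul_diagonal {n R : Type*} [Fintype n] [DecidableEq n] [CommRing R]
    (M : Matrix n n R) (d : n → R) (s : Finset n) :
    ((M * diagonal d).submatrix ((↑) : s → n) (↑)).det =
      (∏ u ∈ s, d u) * (M.submatrix ((↑) : s → n) (↑)).det := by
  have hsub : (M * diagonal d).submatrix ((↑) : s → n) (↑) =
      M.submatrix (↑) (↑) * diagonal fun u : s => d u := by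
    ext a b
    simp [mul_diagonal]
  rw [hsub, det_mul, det_diagonal, Finset.prod_coe_sort s d, mul_comm]

theorem stmt_6_general (k n : ℕ) (hk : n ≤ k)
    (ψ : Fin k → Fin n → ℂ) (p : Fin k → ℝ)
    (ρ : Matrix (Fin n) (Fin n) ℂ)
    (hρ : ρ = ∑ i, (p i : ℂ) • Matrix.of (fun a b => ψ i a * star (ψ i b)))
    (x : Fin n → ℝ)
    (hx : ρ.charpoly = ∏ j, (Polynomial.X - Polynomial.C (x j : ℂ)))
    (A : Matrix (Fin k) (Fin k) ℂ)
    (hA : ∀ i j, A i j = ∑ a, star (ψ i a) * ψ j a)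
    (i : ℕ) (hin : i ≤ n) :
    (esymm n i x : ℂ) =
      ∑ s ∈ Finset.powersetCard i (Finset.univ : Finset (Fin k)),
        (∏ u ∈ s, (p u : ℂ)) *
          (A.submatrix (fun a : {a // a ∈ s} => a.1) (fun a : {a // a ∈ s} => a.1)).det := by
  set Ψ : Matrix (Fin n) (Fin k) ℂ := Matrix.of fun a u => ψ u a
  set D : Matrix (Fin k) (Fin k) ℂ := diagonal fun u => (p u : ℂ)
  have hρΨ : ρ = Ψ * D * Ψᴴ := by
    ext a b
    rw [mul_apply]
    simp only [hρ, Ψ, D, mul_diagonal, Matrix.sum_apply, Matrix.smul_apply, of_apply,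
      conjTranspose_apply, smul_eq_mul]
    exact sum_congr rfl fun u _ => by ring
  have hAΨ : Ψᴴ * (Ψ * D) = A * D := by
    rw [← Matrix.mul_assoc]
    congr 1
    ext u v
    simp [hA, Ψ, mul_apply]
  have hcharpoly := congrArg (coeff · (k - i))
    (charpoly_mul_comm_of_le Ψᴴ (Ψ * D) (by simpa using hk))
  simp only [Fintype.card_fin, coeff_X_pow_mul', ← hρΨ, hx] at hcharpoly
  rw [if_pos (by omega), show k - i - (k - n) = #(univ : Finset (Fin n)) - i by simp; omega,
    prod_X_sub_C_coeff_card_sub _ _ (by simpa using hin), hAΨ] at hcharpoly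
  have hminors := charpoly_coeff_eq_sum_minors (A * D) i (by simpa using hin.trans hk)
  rw [Fintype.card_fin, hcharpoly] at hminors
  simp only [D, det_submatrix_mul_diagonal] at hminors
  rw [esymm]
  push_cast
  exact mul_left_cancel₀ (pow_ne_zero i (neg_ne_zero.mpr one_ne_zero)) hminors

/-- The `i`-th elementary symmetric polynomial of the eigenvalues of
`ρ = ∑_i p_i |ψ_i⟩⟨ψ_i|` equals `∑_{u_1<…<u_i} p_{u_1}⋯p_{u_i} det A_{u_1,…,u_i}`,
where `A` is the matrix of inner products `⟨ψ_i, ψ_j⟩`. -/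
theorem stmt_6 (k n : ℕ) (hn : 1 ≤ n) (hk : n ≤ k)
    (ψ : Fin k → Fin n → ℂ) (p : Fin k → ℝ) (hp : ∀ i, 0 < p i)
    (ρ : Matrix (Fin n) (Fin n) ℂ)
    (hρ : ρ = ∑ i, (p i : ℂ) • Matrix.of (fun a b => ψ i a * star (ψ i b)))
    (x : Fin n → ℝ)
    (hx : ρ.charpoly = ∏ j, (Polynomial.X - Polynomial.C (x j : ℂ)))
    (A : Matrix (Fin k) (Fin k) ℂ)
    (hA : ∀ i j, A i j = ∑ a, star (ψ i a) * ψ j a)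
    (i : ℕ) (hi1 : 1 ≤ i) (hin : i ≤ n) :
    (esymm n i x : ℂ) =
      ∑ s ∈ Finset.powersetCard i (Finset.univ : Finset (Fin k)),
        (∏ u ∈ s, (p u : ℂ)) *
          (A.submatrix (fun a : {a // a ∈ s} => a.1) (fun a : {a // a ∈ s} => a.1)).det :=
  stmt_6_general k n hk ψ p ρ hρ x hx A hA i hin
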